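/- For every structure R there exists a structure in canonical form that is equivalent to R with respect to the congruence ≈; moreover this canonical structure is either the unit 1 or different from 1. (A structure is in canonical form when either it is 1, or all of the following hold: the only negated substructures occurring in it are negative propositional variables; no unit occurs in it while at least one name does; the nesting of occurrences of Par, CoPar, Seq and the self-dual quantifier forms a right-recursive syntax tree; and no occurrence of the self-dual quantifier can be removed while preserving ≈.) -/

import Mathlib

/- Formalization of the deep-inference system BVQ (BV with a self-dual
   quantifier), its symmetric version SBVQ, the process calculus CCSR and
   its labelled transition system, following the paper's definitions. -/

namespace BVQ

/-- Structures of BVQ.  A negative propositional variable `¬a` is represented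
    as `Str.not (Str.pos a)`. -/
inductive Str : Type where
  | one : Str                 -- the unit 1
  | pos : ℕ → Str             -- positive propositional variable
  | not : Str → Str           -- negation
  | ten : Str → Str → Str     -- CoPar (R ⊗ T)
  | seq : Str → Str → Str     -- Seq ⟨R ; T⟩
  | par : Str → Str → Str     -- Par [R ⅋ T]
  | all : ℕ → Str → Str       -- self-dual quantifier ∀a.R
deriving DecidableEq

namespace Str

/-- rename free occurrences of the variable `a` to `b`. -/
def rename (a b : ℕ) : Str → Str
  | one => one
  | pos c => pos (if c = a then b else c)
  | not R => not (rename a b R)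
  | ten R T => ten (rename a b R) (rename a b T)
  | seq R T => seq (rename a b R) (rename a b T)
  | par R T => par (rename a b R) (rename a b T)
  | all c R => if c = a then all c R else all c (rename a b R)

/-- free variable names. -/
def fv : Str → Finset ℕ
  | one => ∅
  | pos a => {a}
  | not R => fv R
  | ten R T => fv R ∪ fv T
  | seq R T => fv R ∪ fv T
  | par R T => fv R ∪ fv T
  | all a R => (fv R).erase a

/-- a structure is Tensor-free when no CoPar occurs in it. -/
def TensorFree : Str → Prop
  | one => True
  | pos _ => True
  | not R => TensorFree R
  | ten _ _ => False
  | seq R T => TensorFree R ∧ TensorFree T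
  | par R T => TensorFree R ∧ TensorFree T
  | all _ R => TensorFree R

/-- the list of atom occurrences (variable name together with its polarity). -/
def atoms : Str → List (ℕ × Bool)
  | one => []
  | pos a => [(a, true)]
  | not R => (atoms R).map (fun p => (p.1, !p.2))
  | ten R T => atoms R ++ atoms T
  | seq R T => atoms R ++ atoms T
  | par R T => atoms R ++ atoms T
  | all _ R => atoms R

/-- number of free occurrences of the positive variable `h`. -/
def countP (h : ℕ) : Str → ℕ
  | one => 0
  | pos a => if a = h then 1 else 0
  | not R => countP h R
  | ten R T => countP h R + countP h T
  | seq R T => countP h R + countP h T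
  | par R T => countP h R + countP h T
  | all a R => if a = h then 0 else countP h R

/-- erase all occurrences of the name `a` (in both polarities), replacing
    them by the unit. -/
def erase (a : ℕ) : Str → Str
  | one => one
  | pos c => if c = a then one else pos c
  | not R => if R = pos a then one else not (erase a R)
  | ten R T => ten (erase a R) (erase a T)
  | seq R T => seq (erase a R) (erase a T)
  | par R T => par (erase a R) (erase a T)
  | all c R => all c (erase a R)

end Str

/-- names: positive or negative propositional variables. -/
def IsLit (R : Str) : Prop := ∃ a : ℕ, R = Str.pos a ∨ R = Str.not (Str.pos a)

/-- The congruence ≈ on structures. -/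
inductive Cong : Str → Str → Prop where
  | refl (R) : Cong R R
  | symm {R T} : Cong R T → Cong T R
  | trans {R T U} : Cong R T → Cong T U → Cong R U
  -- contextual closure
  | not_congr {R T} : Cong R T → Cong (.not R) (.not T)
  | ten_congr {R R' T T'} : Cong R R' → Cong T T' → Cong (.ten R T) (.ten R' T')
  | seq_congr {R R' T T'} : Cong R R' → Cong T T' → Cong (.seq R T) (.seq R' T')
  | par_congr {R R' T T'} : Cong R R' → Cong T T' → Cong (.par R T) (.par R' T')
  | all_congr (a) {R T} : Cong R T → Cong (.all a R) (.all a T)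
  -- unit laws
  | ten_one (R) : Cong (.ten R .one) R
  | seq_one_right (R) : Cong (.seq R .one) R
  | seq_one_left (R) : Cong (.seq .one R) R
  | par_one (R) : Cong (.par R .one) R
  -- associativity
  | ten_assoc (R T U) : Cong (.ten (.ten R T) U) (.ten R (.ten T U))
  | seq_assoc (R T U) : Cong (.seq (.seq R T) U) (.seq R (.seq T U))
  | par_assoc (R T U) : Cong (.par (.par R T) U) (.par R (.par T U))
  -- commutativity
  | ten_comm (R T) : Cong (.ten R T) (.ten T R)
  | par_comm (R T) : Cong (.par R T) (.par T R)
  -- negation laws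
  | not_one : Cong (.not .one) .one
  | not_not (a) : Cong (.not (.not (.pos a))) (.pos a)
  | not_ten (R T) : Cong (.not (.ten R T)) (.par (.not R) (.not T))
  | not_seq (R T) : Cong (.not (.seq R T)) (.seq (.not R) (.not T))
  | not_par (R T) : Cong (.not (.par R T)) (.ten (.not R) (.not T))
  | not_all (a R) : Cong (.not (.all a R)) (.all a (.not R))
  -- vacuous quantifier elimination
  | all_vac (a R) : a ∉ R.fv → Cong (.all a R) R
  -- α-renaming of bound variables
  | alpha (a b R) : b ∉ R.fv → Cong (.all a R) (.all b (R.rename a b))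
  -- exchange of adjacent quantifiers
  | all_exch (a b R) : Cong (.all a (.all b R)) (.all b (.all a R))

/-- one-hole structure contexts S{·}. -/
inductive Ctx : Type where
  | hole : Ctx
  | notC : Ctx → Ctx
  | tenL : Ctx → Str → Ctx
  | tenR : Str → Ctx → Ctx
  | seqL : Ctx → Str → Ctx
  | seqR : Str → Ctx → Ctx
  | parL : Ctx → Str → Ctx
  | parR : Str → Ctx → Ctx
  | allC : ℕ → Ctx → Ctx

/-- filling the hole of a context. -/
def Ctx.fill : Ctx → Str → Str
  | .hole, R => R
  | .notC C, R => .not (C.fill R)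
  | .tenL C T, R => .ten (C.fill R) T
  | .tenR T C, R => .ten T (C.fill R)
  | .seqL C T, R => .seq (C.fill R) T
  | .seqR T C, R => .seq T (C.fill R)
  | .parL C T, R => .par (C.fill R) T
  | .parR T C, R => .par T (C.fill R)
  | .allC a C, R => .all a (C.fill R)

/-- right-contexts S⌞{·} ::= {·} | [S⌞{·} ⅋ R] | ⟨S⌞{·} ; R⟩ | ∀a.S⌞{·}. -/
inductive Ctx.IsRight : Ctx → Prop where
  | hole : Ctx.IsRight .hole
  | parL {C} (T) : Ctx.IsRight C → Ctx.IsRight (.parL C T)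
  | seqL {C} (T) : Ctx.IsRight C → Ctx.IsRight (.seqL C T)
  | allC (a) {C} : Ctx.IsRight C → Ctx.IsRight (.allC a C)

/-- the hole of the context lies in the scope of a quantifier binding `b`. -/
def Ctx.captures (b : ℕ) : Ctx → Bool
  | .hole => false
  | .notC C => C.captures b
  | .tenL C _ => C.captures b
  | .tenR _ C => C.captures b
  | .seqL C _ => C.captures b
  | .seqR _ C => C.captures b
  | .parL C _ => C.captures b
  | .parR _ C => C.captures b
  | .allC a C => (a == b) || C.captures b

/-- rule names of SBVQ. -/
inductive Rule : Type where
  | aiDown | s | qDown | uDown | aiUp | qUp | uUp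
deriving DecidableEq

/-- redex/contractum pairs of the rules (premise, conclusion). -/
inductive Shallow : Rule → Str → Str → Prop where
  | aiDown (a : ℕ) :
      Shallow .aiDown .one (.par (.pos a) (.not (.pos a)))
  | s (R T U : Str) :
      Shallow .s (.ten (.par R U) T) (.par (.ten R T) U)
  | qDown (R T U V : Str) :
      Shallow .qDown (.seq (.par R U) (.par T V)) (.par (.seq R T) (.seq U V))
  | uDown (a : ℕ) (R T : Str) :
      Shallow .uDown (.all a (.par R T)) (.par (.all a R) (.all a T))
  | aiUp (a : ℕ) :
      Shallow .aiUp (.ten (.pos a) (.not (.pos a))) .one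
  | qUp (R T U V : Str) :
      Shallow .qUp (.ten (.seq R U) (.seq T V)) (.seq (.ten R T) (.ten U V))
  | uUp (a : ℕ) (R T : Str) :
      Shallow .uUp (.ten (.all a R) (.all a T)) (.all a (.ten R T))

/-- one instance of rule ρ with premise T and conclusion R, applied inside a
    context, modulo ≈. -/
def Step (ρ : Rule) (T R : Str) : Prop :=
  ∃ (C : Ctx) (p c : Str), Shallow ρ p c ∧ Cong T (C.fill p) ∧ Cong R (C.fill c)

/-- an instance of the rule at↓⌞: an ai↓ instance whose conclusion has the
    form S⌞[a ⅋ ¬a] for a right-context S⌞{·}. -/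
def StepAtR (T R : Str) : Prop :=
  ∃ (C : Ctx) (a : ℕ), C.IsRight ∧ Cong T (C.fill .one) ∧
    Cong R (C.fill (.par (.pos a) (.not (.pos a))))

def BVQrules : Set Rule := {Rule.aiDown, Rule.s, Rule.qDown, Rule.uDown}
def SBVQrules : Set Rule :=
  {Rule.aiDown, Rule.s, Rule.qDown, Rule.uDown, Rule.aiUp, Rule.qUp, Rule.uUp}

/-- Derivations: a finite sequence of rule instances composed modulo ≈, from
    the premise (top) to the conclusion (bottom). -/
inductive DerivD : Str → Str → Type where
  | base {T R : Str} : Cong T R → DerivD T R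
  | cons {T U R : Str} (ρ : Rule) (C : Ctx) (p c : Str) :
      Shallow ρ p c → Cong T (C.fill p) → Cong U (C.fill c) →
      DerivD U R → DerivD T R

namespace DerivD

/-- all rules used belong to B. -/
def UsesOnly (B : Set Rule) : {T R : Str} → DerivD T R → Prop
  | _, _, .base _ => True
  | _, _, .cons ρ _ _ _ _ _ _ D => ρ ∈ B ∧ UsesOnly B D

/-- every structure occurring in the derivation is Tensor-free. -/
def AllTF : {T R : Str} → DerivD T R → Prop
  | T, R, .base _ => T.TensorFree ∧ R.TensorFree
  | T, _, .cons _ _ _ _ _ _ _ D => T.TensorFree ∧ AllTF D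

/-- no instance of ai↓ occurs. -/
def NoAI : {T R : Str} → DerivD T R → Prop
  | _, _, .base _ => True
  | _, _, .cons ρ _ _ _ _ _ _ D => ρ ≠ Rule.aiDown ∧ NoAI D

/-- every instance of ai↓ occurring in the derivation is an at↓⌞ instance. -/
def Standard : {T R : Str} → DerivD T R → Prop
  | _, _, .base _ => True
  | _, _, @DerivD.cons T U _ ρ _ _ _ _ _ _ D =>
      (ρ = Rule.aiDown → StepAtR T U) ∧ Standard D

/-- every rule instance (with its premise and conclusion) satisfies P. -/
def InstancesOK (P : Rule → Str → Str → Prop) : {T R : Str} → DerivD T R → Prop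
  | _, _, .base _ => True
  | _, _, @DerivD.cons T U _ ρ _ _ _ _ _ _ D => P ρ T U ∧ InstancesOK P D

/-- a derivation is trivial when all its structures are Tensor-free and it
    contains no instance of ai↓. -/
def Trivial {T R : Str} (D : DerivD T R) : Prop := AllTF D ∧ NoAI D

/-- precompose a derivation with a congruence. -/
def precong {T U R : Str} (h : Cong T U) : DerivD U R → DerivD T R
  | .base h' => .base (Cong.trans h h')
  | .cons ρ C p c sh h1 h2 D => .cons ρ C p c sh (Cong.trans h h1) h2 D

/-- membership in the standard fragment BVQ⌞ = {at↓⌞, q↓, u↓}, whose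
    derivations contain Tensor-free structures only. -/
def InBVQL {T R : Str} (D : DerivD T R) : Prop :=
  UsesOnly {Rule.aiDown, Rule.qDown, Rule.uDown} D ∧ Standard D ∧ AllTF D

end DerivD

/-- `Erases a D E` : E is obtained from D by replacing the unit for the
    occurrences of the atoms a and ¬a in every structure of D, eliminating
    the rule instances that become fake. -/
inductive Erases (a : ℕ) :
    {T R T' R' : Str} → DerivD T R → DerivD T' R' → Prop where
  | base {T R : Str} (h : Cong T R) (h' : Cong (T.erase a) (R.erase a)) :
      Erases a (.base h) (.base h')
  | keep {T U R R' : Str} {ρ : Rule} {C : Ctx} {p c : Str}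
      (sh : Shallow ρ p c) (h1 : Cong T (C.fill p)) (h2 : Cong U (C.fill c))
      {D : DerivD U R} {E : DerivD (U.erase a) R'}
      (C' : Ctx) (p' c' : Str) (sh' : Shallow ρ p' c')
      (h1' : Cong (T.erase a) (C'.fill p')) (h2' : Cong (U.erase a) (C'.fill c')) :
      Erases a D E →
      Erases a (.cons ρ C p c sh h1 h2 D) (.cons ρ C' p' c' sh' h1' h2' E)
  | drop {T U R R' : Str} {ρ : Rule} {C : Ctx} {p c : Str}
      (sh : Shallow ρ p c) (h1 : Cong T (C.fill p)) (h2 : Cong U (C.fill c))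
      {D : DerivD U R} {E : DerivD (U.erase a) R'}
      (hc : Cong (T.erase a) (U.erase a)) :
      Erases a D E →
      Erases a (.cons ρ C p c sh h1 h2 D) (E.precong hc)

/-- `IsReduction a D E` : E is the reduction of D, obtained by locating the
    lowermost instance of at↓⌞ in D (annihilating the pair a, ¬a), replacing
    the unit for the occurrences of a and ¬a in the part of D below it, and
    eliminating the fake rule instances so created. -/
inductive IsReduction (a : ℕ) :
    {T R R' : Str} → DerivD T R → DerivD T R' → Prop where
  | step {T U R R' : Str} (ρ : Rule) (C : Ctx) (p c : Str)
      (sh : Shallow ρ p c) (h1 : Cong T (C.fill p)) (h2 : Cong U (C.fill c))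
      {D : DerivD U R} {E : DerivD U R'} :
      IsReduction a D E →
      IsReduction a (.cons ρ C p c sh h1 h2 D) (.cons ρ C p c sh h1 h2 E)
  | red {T U R R' : Str} (C : Ctx)
      (sh : Shallow .aiDown .one (.par (.pos a) (.not (.pos a))))
      (h1 : Cong T (C.fill .one))
      (h2 : Cong U (C.fill (.par (.pos a) (.not (.pos a)))))
      (hat : StepAtR T U)
      {D : DerivD U R} {E : DerivD (U.erase a) R'}
      (hno : D.NoAI) (hE : Erases a D E) (hc : Cong T (U.erase a)) :
      IsReduction a
        (.cons .aiDown C .one (.par (.pos a) (.not (.pos a))) sh h1 h2 D)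
        (E.precong hc)

/-- actions of CCSR: names a and co-names ā. -/
inductive Act : Type where
  | name : ℕ → Act
  | coname : ℕ → Act
deriving DecidableEq

def Act.var : Act → ℕ
  | .name a => a
  | .coname a => a

def Act.dual : Act → Act
  | .name a => .coname a
  | .coname a => .name a

/-- the literal (name) of BVQ corresponding to an action. -/
def Act.lit : Act → Str
  | .name a => .pos a
  | .coname a => .not (.pos a)

/-- processes of CCSR. -/
inductive Proc : Type where
  | nil : Proc
  | act : Act → Proc → Proc
  | par : Proc → Proc → Proc
  | nu : ℕ → Proc → Proc

/-- free names of a process. -/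
def Proc.fn : Proc → Finset ℕ
  | .nil => ∅
  | .act l E => insert l.var (fn E)
  | .par E F => fn E ∪ fn F
  | .nu a E => (fn E).erase a

/-- bound names of a process. -/
def Proc.bn : Proc → Finset ℕ
  | .nil => ∅
  | .act _ E => bn E
  | .par E F => bn E ∪ bn F
  | .nu a E => insert a (bn E)

/-- the translation ⟦·⟧ of processes into structures. -/
def Proc.toStr : Proc → Str
  | .nil => .one
  | .act l E => .seq l.lit (toStr E)
  | .par E F => .par (toStr E) (toStr F)
  | .nu a E => .all a (toStr E)

/-- structural congruence of processes. -/
inductive PCong : Proc → Proc → Prop where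
  | refl (E) : PCong E E
  | symm {E F} : PCong E F → PCong F E
  | trans {E F G} : PCong E F → PCong F G → PCong E G
  | act_congr (l) {E F} : PCong E F → PCong (.act l E) (.act l F)
  | par_congr {E E' F F'} : PCong E E' → PCong F F' → PCong (.par E F) (.par E' F')
  | nu_congr (a) {E F} : PCong E F → PCong (.nu a E) (.nu a F)
  | par_comm (E F) : PCong (.par E F) (.par F E)
  | par_assoc (E F G) : PCong (.par (.par E F) G) (.par E (.par F G))
  | par_nil (E) : PCong (.par E .nil) E
  | nu_exch (a b E) : PCong (.nu a (.nu b E)) (.nu b (.nu a E))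
  | nu_vac (a E) : a ∉ E.fn → PCong (.nu a E) E
  | scope (a E F) : a ∉ F.fn → PCong (.nu a (.par E F)) (.par (.nu a E) F)

/-- The labelled transition system of CCSR.  A label sequence is a finite
    list of (non-silent) actions: the silent label τ is represented by the
    empty list (sequences are taken modulo absorption of τ). -/
inductive LTS : Proc → List Act → Proc → Prop where
  | refl (E) : LTS E [] E
  | act (l E) : LTS (.act l E) [l] E
  | com {E E' F F'} (l) : LTS E [l] E' → LTS F [l.dual] F' →
      LTS (.par E F) [] (.par E' F')
  | parCtx {E E' σ} (F) : LTS E σ E' → LTS (.par E F) σ (.par E' F)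
  | resTau {E E'} (l a) : LTS E [l] E' → l.var = a →
      LTS (.nu a E) [] (.nu a E')
  | resLbl {E E'} (l a) : LTS E [l] E' → l.var ≠ a →
      LTS (.nu a E) [l] (.nu a E')
  | trans {E F G σ σ'} : LTS E σ F → LTS F σ' G → LTS E (σ ++ σ') G
  | congr {E E' F F' σ} : PCong E E' → LTS E' σ F' → PCong F' F → LTS E σ F

/-- process structures: images of the translation ⟦·⟧. -/
inductive ProcStr : Str → Prop where
  | one : ProcStr .one
  | seq {l R} : IsLit l → ProcStr R → ProcStr (.seq l R)
  | par {R T} : ProcStr R → ProcStr T → ProcStr (.par R T)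
  | all (a) {R} : ProcStr R → ProcStr (.all a R)

/-- the grammar R ::= 1 | ℓ | [R ⅋ R] | ∀a.R. -/
inductive PreSimple : Str → Prop where
  | one : PreSimple .one
  | pos (a) : PreSimple (.pos a)
  | neg (a) : PreSimple (.not (.pos a))
  | par {R T} : PreSimple R → PreSimple T → PreSimple (.par R T)
  | all (a) {R} : PreSimple R → PreSimple (.all a R)

/-- simple structures: generated by 1 | ℓ | [R ⅋ R] | ∀a.R with pairwise
    distinct occurring variable names. -/
def SimpleStr (R : Str) : Prop := PreSimple R ∧ R.atoms.Nodup

/-- canonical environment structures different from the unit. -/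
inductive EnvC : Str → Prop where
  | lit {l} : IsLit l → EnvC l
  | seq {l R} : IsLit l → EnvC R → EnvC (.seq l R)
  | all (a) {R} : a ∈ R.fv → EnvC R → EnvC (.all a R)

/-- environment structures. -/
def EnvStr (R : Str) : Prop := R = Str.one ∨ EnvC R

/-- the map ⟦R⟧X from environment structures to sequences of action labels
    (τ is represented by the empty sequence). -/
def envSeq : Finset ℕ → Str → List Act
  | _, .one => []
  | X, .pos a => if a ∈ X then [] else [Act.name a]
  | X, .not (.pos a) => if a ∈ X then [] else [Act.coname a]
  | X, .seq (.pos a) R => (if a ∈ X then [] else [Act.name a]) ++ envSeq X R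
  | X, .seq (.not (.pos a)) R => (if a ∈ X then [] else [Act.coname a]) ++ envSeq X R
  | X, .all a R => envSeq (insert a X) R
  | _, _ => []

/-- a derivation with conclusion [T ⅋ R] consumes the environment structure R
    when every atom of R is annihilated along the derivation by an instance of
    at↓⌞, so that no atom of R occurs in the premise of the derivation. -/
def Consumes (R T : Str) : Prop := ∀ p ∈ R.atoms, p ∉ T.atoms

end BVQ

namespace BVQ

/-- the only negated substructures are negative propositional variables. -/
def NegAtomic : Str → Prop
  | .one => True
  | .pos _ => True
  | .not R => ∃ a : ℕ, R = Str.pos a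
  | .ten R T => NegAtomic R ∧ NegAtomic T
  | .seq R T => NegAtomic R ∧ NegAtomic T
  | .par R T => NegAtomic R ∧ NegAtomic T
  | .all _ R => NegAtomic R

/-- no unit occurs in the structure. -/
def NoUnit : Str → Prop
  | .one => False
  | .pos _ => True
  | .not R => NoUnit R
  | .ten R T => NoUnit R ∧ NoUnit T
  | .seq R T => NoUnit R ∧ NoUnit T
  | .par R T => NoUnit R ∧ NoUnit T
  | .all _ R => NoUnit R

/-- at least one name occurs in the structure. -/
def HasName (R : Str) : Prop := R.atoms ≠ []

/-- the nesting of Par, CoPar and Seq forms a right-recursive syntax tree. -/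
def RightRec : Str → Prop
  | .one => True
  | .pos _ => True
  | .not R => RightRec R
  | .ten R T => (∀ A B, R ≠ Str.ten A B) ∧ RightRec R ∧ RightRec T
  | .seq R T => (∀ A B, R ≠ Str.seq A B) ∧ RightRec R ∧ RightRec T
  | .par R T => (∀ A B, R ≠ Str.par A B) ∧ RightRec R ∧ RightRec T
  | .all _ R => RightRec R

/-- every occurrence of the self-dual quantifier effectively binds an
    occurring name, so none of them can be eliminated preserving ≈. -/
def EffBinders : Str → Prop
  | .one => True
  | .pos _ => True
  | .not R => EffBinders R
  | .ten R T => EffBinders R ∧ EffBinders T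
  | .seq R T => EffBinders R ∧ EffBinders T
  | .par R T => EffBinders R ∧ EffBinders T
  | .all a R => a ∈ R.fv ∧ EffBinders R

/-- canonical structures. -/
def Canonical (R : Str) : Prop :=
  R = Str.one ∨
    (NegAtomic R ∧ NoUnit R ∧ HasName R ∧ RightRec R ∧ EffBinders R)

/-! The canonical form is reached in three passes, each preserving `≈`: push negations to the
atoms, remove units and vacuous quantifiers bottom-up, then reassociate every chain of equal
connectives to the right. Each pass preserves what the previous ones established; a structure
without units always contains a name, so the result is `1` or canonical. -/

inductive BinOp : Type where
  | ten | seq | par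

namespace BinOp

def app : BinOp → Str → Str → Str
  | ten => .ten
  | seq => .seq
  | par => .par

def dual : BinOp → BinOp
  | ten => par
  | seq => seq
  | par => ten

@[simp]
theorem dual_dual (o : BinOp) : o.dual.dual = o := by
  cases o <;> rfl

end BinOp

@[elab_as_elim]
theorem Str.induction_app {motive : Str → Prop} (one : motive .one)
    (pos : ∀ a, motive (.pos a)) (not : ∀ R, motive R → motive (.not R))
    (app : ∀ (o : BinOp) R T, motive R → motive T → motive (o.app R T))
    (all : ∀ a R, motive R → motive (.all a R)) : ∀ R, motive R
  | .one => one
  | .pos a => pos a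
  | .not R => not R (Str.induction_app one pos not app all R)
  | .ten R T => app .ten R T (Str.induction_app one pos not app all R)
      (Str.induction_app one pos not app all T)
  | .seq R T => app .seq R T (Str.induction_app one pos not app all R)
      (Str.induction_app one pos not app all T)
  | .par R T => app .par R T (Str.induction_app one pos not app all R)
      (Str.induction_app one pos not app all T)
  | .all a R => all a R (Str.induction_app one pos not app all R)

@[simp]
theorem fv_app (o : BinOp) (R T : Str) : (o.app R T).fv = R.fv ∪ T.fv := by
  cases o <;> rfl

@[simp]
theorem atoms_app (o : BinOp) (R T : Str) : (o.app R T).atoms = R.atoms ++ T.atoms := by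
  cases o <;> rfl

namespace Cong

theorem app_congr (o : BinOp) {R R' T T' : Str} (hR : Cong R R') (hT : Cong T T') :
    Cong (o.app R T) (o.app R' T') := by
  cases o
  exacts [ten_congr hR hT, seq_congr hR hT, par_congr hR hT]

theorem app_one_right (o : BinOp) (R : Str) : Cong (o.app R .one) R := by
  cases o
  exacts [ten_one R, seq_one_right R, par_one R]

theorem app_one_left (o : BinOp) (R : Str) : Cong (o.app .one R) R := by
  cases o
  exacts [(ten_comm _ _).trans (ten_one R), seq_one_left R, (par_comm _ _).trans (par_one R)]

theorem app_assoc (o : BinOp) (R T U : Str) :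
    Cong (o.app (o.app R T) U) (o.app R (o.app T U)) := by
  cases o
  exacts [ten_assoc R T U, seq_assoc R T U, par_assoc R T U]

theorem not_app (o : BinOp) (R T : Str) :
    Cong (.not (o.app R T)) (o.dual.app (.not R) (.not T)) := by
  cases o
  exacts [not_ten R T, not_seq R T, not_par R T]

theorem not_not_self (R : Str) : Cong (.not (.not R)) R := by
  induction R using Str.induction_app with
  | one => exact (not_congr not_one).trans not_one
  | pos a => exact not_not a
  | not R ih => exact not_congr ih
  | app o R T ihR ihT =>
    have h := (not_congr (not_app o R T)).trans (not_app o.dual _ _)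
    rw [BinOp.dual_dual] at h
    exact h.trans (app_congr o ihR ihT)
  | all a R ih => exact ((not_congr (not_all a R)).trans (not_all a _)).trans (all_congr a ih)

end Cong

def Compositional (P : Str → Prop) : Prop :=
  ∀ (o : BinOp) (R T : Str), P (o.app R T) ↔ P R ∧ P T

theorem compositional_negAtomic : Compositional NegAtomic := by
  intro o R T; cases o <;> rfl

theorem compositional_noUnit : Compositional NoUnit := by
  intro o R T; cases o <;> rfl

theorem compositional_effBinders : Compositional EffBinders := by
  intro o R T; cases o <;> rfl

theorem rightRec_app (o : BinOp) (R T : Str) :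
    RightRec (o.app R T) ↔ (∀ A B, R ≠ o.app A B) ∧ RightRec R ∧ RightRec T := by
  cases o <;> rfl

theorem hasName_of_noUnit {R : Str} (h : NoUnit R) : HasName R := by
  induction R using Str.induction_app with
  | one => exact h.elim
  | pos a => simp [HasName, Str.atoms]
  | not R ih => simpa [HasName, Str.atoms] using ih h
  | app o R T ihR _ =>
    simpa [HasName] using fun hR _ => ihR ((compositional_noUnit o R T).1 h).1 hR
  | all a R ih => exact ih h

section NegationNormalForm

mutual
def nnf : Str → Str
  | .one => .one
  | .pos a => .pos a
  | .not R => nnfNot R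
  | .ten R T => .ten (nnf R) (nnf T)
  | .seq R T => .seq (nnf R) (nnf T)
  | .par R T => .par (nnf R) (nnf T)
  | .all a R => .all a (nnf R)

def nnfNot : Str → Str
  | .one => .one
  | .pos a => .not (.pos a)
  | .not R => nnf R
  | .ten R T => .par (nnfNot R) (nnfNot T)
  | .seq R T => .seq (nnfNot R) (nnfNot T)
  | .par R T => .ten (nnfNot R) (nnfNot T)
  | .all a R => .all a (nnfNot R)
end

theorem nnf_app (o : BinOp) (R T : Str) : nnf (o.app R T) = o.app (nnf R) (nnf T) := by
  cases o <;> simp [BinOp.app, nnf]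

theorem nnfNot_app (o : BinOp) (R T : Str) :
    nnfNot (o.app R T) = o.dual.app (nnfNot R) (nnfNot T) := by
  cases o <;> simp [BinOp.app, BinOp.dual, nnfNot]

theorem cong_nnf_and_nnfNot (R : Str) : Cong R (nnf R) ∧ Cong (.not R) (nnfNot R) := by
  induction R using Str.induction_app with
  | one => exact ⟨.refl _, .not_one⟩
  | pos a => exact ⟨.refl _, .refl _⟩
  | not R ih => exact ⟨ih.2, (Cong.not_not_self R).trans ih.1⟩
  | app o R T ihR ihT =>
    rw [nnf_app, nnfNot_app]
    exact ⟨.app_congr o ihR.1 ihT.1, (Cong.not_app o R T).trans (.app_congr _ ihR.2 ihT.2)⟩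
  | all a R ih => exact ⟨.all_congr a ih.1, (Cong.not_all a R).trans (.all_congr a ih.2)⟩

theorem negAtomic_nnf_and_nnfNot (R : Str) : NegAtomic (nnf R) ∧ NegAtomic (nnfNot R) := by
  induction R using Str.induction_app with
  | one => exact ⟨trivial, trivial⟩
  | pos a => exact ⟨trivial, a, rfl⟩
  | not R ih => exact ih.symm
  | app o R T ihR ihT =>
    rw [nnf_app, nnfNot_app, compositional_negAtomic, compositional_negAtomic]
    exact ⟨⟨ihR.1, ihT.1⟩, ihR.2, ihT.2⟩
  | all a R ih => exact ih

end NegationNormalForm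

section UnitElimination

def smartApp (o : BinOp) (R T : Str) : Str :=
  if R = .one then T else if T = .one then R else o.app R T

def smartAll (a : ℕ) (R : Str) : Str :=
  if a ∈ R.fv then .all a R else R

def elimUnits : Str → Str
  | .one => .one
  | .pos a => .pos a
  | .not R => .not (elimUnits R)
  | .ten R T => smartApp .ten (elimUnits R) (elimUnits T)
  | .seq R T => smartApp .seq (elimUnits R) (elimUnits T)
  | .par R T => smartApp .par (elimUnits R) (elimUnits T)
  | .all a R => smartAll a (elimUnits R)

theorem elimUnits_app (o : BinOp) (R T : Str) :
    elimUnits (o.app R T) = smartApp o (elimUnits R) (elimUnits T) := by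
  cases o <;> rfl

theorem cong_smartApp (o : BinOp) (R T : Str) : Cong (o.app R T) (smartApp o R T) := by
  unfold smartApp
  split_ifs with hR hT
  · exact hR ▸ Cong.app_one_left o T
  · exact hT ▸ Cong.app_one_right o R
  · exact .refl _

theorem cong_smartAll (a : ℕ) (R : Str) : Cong (.all a R) (smartAll a R) := by
  unfold smartAll
  split_ifs with h
  · exact .refl _
  · exact .all_vac a R h

theorem Compositional.smartApp {P : Str → Prop} (hP : Compositional P) (o : BinOp)
    {R T : Str} (hR : P R) (hT : P T) : P (smartApp o R T) := by
  unfold BVQ.smartApp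
  split_ifs
  exacts [hT, hR, (hP o R T).2 ⟨hR, hT⟩]

theorem cong_elimUnits (R : Str) : Cong R (elimUnits R) := by
  induction R using Str.induction_app with
  | one => exact .refl _
  | pos a => exact .refl _
  | not R ih => exact .not_congr ih
  | app o R T ihR ihT =>
    rw [elimUnits_app]
    exact (Cong.app_congr o ihR ihT).trans (cong_smartApp o _ _)
  | all a R ih => exact (Cong.all_congr a ih).trans (cong_smartAll a _)

theorem negAtomic_elimUnits {R : Str} (h : NegAtomic R) : NegAtomic (elimUnits R) := by
  induction R using Str.induction_app with
  | one | pos a => trivial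
  | not R _ =>
    obtain ⟨a, rfl⟩ := h
    exact ⟨a, rfl⟩
  | app o R T ihR ihT =>
    rw [compositional_negAtomic] at h
    rw [elimUnits_app]
    exact compositional_negAtomic.smartApp o (ihR h.1) (ihT h.2)
  | all a R ih =>
    show NegAtomic (smartAll a _)
    unfold smartAll
    split_ifs
    exacts [ih h, ih h]

theorem effBinders_elimUnits (R : Str) : EffBinders (elimUnits R) := by
  induction R using Str.induction_app with
  | one | pos a => trivial
  | not R ih => exact ih
  | app o R T ihR ihT =>
    rw [elimUnits_app]
    exact compositional_effBinders.smartApp o ihR ihT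
  | all a R ih =>
    show EffBinders (smartAll a _)
    unfold smartAll
    split_ifs with h
    exacts [⟨h, ih⟩, ih]

theorem elimUnits_eq_one_or_noUnit {R : Str} (h : NegAtomic R) :
    elimUnits R = .one ∨ NoUnit (elimUnits R) := by
  induction R using Str.induction_app with
  | one => exact .inl rfl
  | pos a => exact .inr trivial
  | not R _ =>
    obtain ⟨a, rfl⟩ := h
    exact .inr trivial
  | app o R T ihR ihT =>
    rw [compositional_negAtomic] at h
    rw [elimUnits_app]
    unfold smartApp
    split_ifs with hR hT
    · exact ihT h.2
    · exact ihR h.1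
    · exact .inr ((compositional_noUnit o _ _).2 ⟨(ihR h.1).resolve_left hR,
        (ihT h.2).resolve_left hT⟩)
  | all a R ih =>
    show smartAll a _ = .one ∨ NoUnit (smartAll a _)
    unfold smartAll
    split_ifs with ha
    · refine .inr ((ih h).resolve_left fun h1 => ?_)
      simp [h1, Str.fv] at ha
    · exact ih h

end UnitElimination

section RightAssociation

def rotate : BinOp → Str → Str → Str
  | .ten, .ten A B, T => rotate .ten A (rotate .ten B T)
  | .seq, .seq A B, T => rotate .seq A (rotate .seq B T)
  | .par, .par A B, T => rotate .par A (rotate .par B T)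
  | o, R, T => o.app R T

theorem rotate_app (o : BinOp) (A B T : Str) :
    rotate o (o.app A B) T = rotate o A (rotate o B T) := by
  cases o <;> rfl

theorem rotate_of_forall_ne {o : BinOp} {R : Str} (h : ∀ A B, R ≠ o.app A B) (T : Str) :
    rotate o R T = o.app R T := by
  cases o <;> cases R <;> first | rfl | exact absurd rfl (h _ _)

theorem rotate_induction {motive : Str → Str → Prop} (o : BinOp)
    (app : ∀ A B T, motive B T → motive A (rotate o B T) → motive (o.app A B) T)
    (base : ∀ R T, (∀ A B, R ≠ o.app A B) → motive R T) (R T : Str) : motive R T := by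
  induction R using Str.induction_app generalizing T with
  | app o' A B ihA ihB =>
    by_cases ho : o' = o
    · subst ho
      exact app A B T (ihB T) (ihA _)
    · exact base _ T fun _ _ h => ho (by cases o <;> cases o' <;> first | rfl | cases h)
  | _ => exact base _ T fun _ _ h => by cases o <;> cases h

theorem cong_rotate (o : BinOp) (R T : Str) : Cong (o.app R T) (rotate o R T) := by
  induction R, T using rotate_induction o with
  | app A B T hB hA =>
    rw [rotate_app]
    exact ((Cong.app_assoc o A B T).trans (Cong.app_congr o (.refl A) hB)).trans hA
  | base R T h => rw [rotate_of_forall_ne h]; exact .refl _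

theorem fv_rotate (o : BinOp) (R T : Str) : (rotate o R T).fv = R.fv ∪ T.fv := by
  induction R, T using rotate_induction o with
  | app A B T hB hA => rw [rotate_app, hA, hB, fv_app, Finset.union_assoc]
  | base R T h => rw [rotate_of_forall_ne h, fv_app]

theorem Compositional.rotate {P : Str → Prop} (hP : Compositional P) (o : BinOp) {R T : Str}
    (hR : P R) (hT : P T) : P (rotate o R T) := by
  induction R, T using rotate_induction o with
  | app A B T hB hA =>
    rw [hP] at hR
    rw [rotate_app]
    exact hA hR.1 (hB hR.2 hT)
  | base R T h => rw [rotate_of_forall_ne h]; exact (hP o R T).2 ⟨hR, hT⟩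

theorem rightRec_rotate (o : BinOp) {R T : Str} (hR : RightRec R) (hT : RightRec T) :
    RightRec (rotate o R T) := by
  induction R, T using rotate_induction o with
  | app A B T hB hA =>
    rw [rightRec_app] at hR
    rw [rotate_app]
    exact hA hR.2.1 (hB hR.2.2 hT)
  | base R T h => rw [rotate_of_forall_ne h, rightRec_app]; exact ⟨h, hR, hT⟩

def rightAssoc : Str → Str
  | .one => .one
  | .pos a => .pos a
  | .not R => .not (rightAssoc R)
  | .ten R T => rotate .ten (rightAssoc R) (rightAssoc T)
  | .seq R T => rotate .seq (rightAssoc R) (rightAssoc T)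
  | .par R T => rotate .par (rightAssoc R) (rightAssoc T)
  | .all a R => .all a (rightAssoc R)

theorem rightAssoc_app (o : BinOp) (R T : Str) :
    rightAssoc (o.app R T) = rotate o (rightAssoc R) (rightAssoc T) := by
  cases o <;> rfl

theorem cong_rightAssoc (R : Str) : Cong R (rightAssoc R) := by
  induction R using Str.induction_app with
  | one | pos a => exact .refl _
  | not R ih => exact .not_congr ih
  | app o R T ihR ihT =>
    rw [rightAssoc_app]
    exact (Cong.app_congr o ihR ihT).trans (cong_rotate o _ _)
  | all a R ih => exact .all_congr a ih

theorem fv_rightAssoc (R : Str) : (rightAssoc R).fv = R.fv := by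
  induction R using Str.induction_app with
  | one | pos a => rfl
  | not R ih | all a R ih => simp only [rightAssoc, Str.fv, ih]
  | app o R T ihR ihT => rw [rightAssoc_app, fv_rotate, ihR, ihT, fv_app]

theorem rightRec_rightAssoc (R : Str) : RightRec (rightAssoc R) := by
  induction R using Str.induction_app with
  | one | pos a => trivial
  | not R ih | all a R ih => exact ih
  | app o R T ihR ihT => rw [rightAssoc_app]; exact rightRec_rotate o ihR ihT

theorem negAtomic_rightAssoc {R : Str} (h : NegAtomic R) : NegAtomic (rightAssoc R) := by
  induction R using Str.induction_app with
  | one | pos a => trivial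
  | not R _ =>
    obtain ⟨a, rfl⟩ := h
    exact ⟨a, rfl⟩
  | app o R T ihR ihT =>
    rw [compositional_negAtomic] at h
    rw [rightAssoc_app]
    exact compositional_negAtomic.rotate o (ihR h.1) (ihT h.2)
  | all a R ih => exact ih h

theorem noUnit_rightAssoc {R : Str} (h : NoUnit R) : NoUnit (rightAssoc R) := by
  induction R using Str.induction_app with
  | one => exact h
  | pos a => trivial
  | not R ih | all a R ih => exact ih h
  | app o R T ihR ihT =>
    rw [compositional_noUnit] at h
    rw [rightAssoc_app]
    exact compositional_noUnit.rotate o (ihR h.1) (ihT h.2)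

theorem effBinders_rightAssoc {R : Str} (h : EffBinders R) : EffBinders (rightAssoc R) := by
  induction R using Str.induction_app with
  | one | pos a => trivial
  | not R ih => exact ih h
  | app o R T ihR ihT =>
    rw [compositional_effBinders] at h
    rw [rightAssoc_app]
    exact compositional_effBinders.rotate o (ihR h.1) (ihT h.2)
  | all a R ih => exact ⟨(fv_rightAssoc R).symm ▸ h.1, ih h.2⟩

end RightAssociation

/-- every structure is ≈-equivalent to a canonical one, which
    is either the unit or different from the unit. -/
theorem normalization_to_canonical (R : Str) :
    ∃ C : Str, Canonical C ∧ Cong R C ∧ (C = Str.one ∨ C ≠ Str.one) := by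
  set E := elimUnits (nnf R)
  have hNA : NegAtomic (nnf R) := (negAtomic_nnf_and_nnfNot R).1
  have hRE : Cong R E := (cong_nnf_and_nnfNot R).1.trans (cong_elimUnits _)
  rcases elimUnits_eq_one_or_noUnit hNA with hE | hE
  · exact ⟨.one, .inl rfl, hE ▸ hRE, .inl rfl⟩
  · have hNU : NoUnit (rightAssoc E) := noUnit_rightAssoc hE
    refine ⟨rightAssoc E, .inr ⟨negAtomic_rightAssoc (negAtomic_elimUnits hNA), hNU,
      hasName_of_noUnit hNU, rightRec_rightAssoc E,
      effBinders_rightAssoc (effBinders_elimUnits _)⟩, hRE.trans (cong_rightAssoc E),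
      eq_or_ne _ _⟩

end BVQ
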